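/- Let 0 < L ≤ U with condition number κ := U/L, and let f ∈ F_{L,U} with unique minimizer x₀. Starting from an arbitrary initial guess x⁽⁰⁾ ∈ ℝⁿ, the gradient descent iterates with optimal step size α* = 2/(L+U), defined by x⁽ᵏ⁺¹⁾ = x⁽ᵏ⁾ − α* ∇f(x⁽ᵏ⁾), satisfy ‖x⁽ᵏ⁾ − x₀‖ ≤ ((κ − 1)/(κ + 1))ᵏ ‖x⁽⁰⁾ − x₀‖ for every k ∈ ℕ. -/

import Mathlib

/-!
The gradient step `G z = z - α • ∇f z` has derivative `1 - α ∇²f`, a self-adjoint operator whose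
Rayleigh quotients lie in `[1 - α U, 1 - α L]`; so its norm is at most
`max |1 - α L| |1 - α U|` and, by the mean value inequality, `G` is Lipschitz with that constant.
For `α = 2 / (L + U)` the constant is `(U - L) / (U + L) = (κ - 1) / (κ + 1)`, and the minimizer
is a fixed point of `G`, so each step contracts the error by this factor.
-/

open scoped RealInnerProductSpace NNReal
open InnerProductSpace

/-- `f ∈ F_{L,U}`: twice continuously differentiable, convex, and every eigenvalue of the
(symmetric) Hessian `∇²f(x)` lies in `[L, U]`, expressed via the quadratic form
`L ‖v‖² ≤ vᵀ ∇²f(x) v ≤ U ‖v‖²`. -/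
def MemFLU {n : ℕ} (L U : ℝ) (f : EuclideanSpace ℝ (Fin n) → ℝ) : Prop :=
  ContDiff ℝ 2 f ∧ ConvexOn ℝ Set.univ f ∧
    ∀ x v : EuclideanSpace ℝ (Fin n),
      L * ‖v‖ ^ 2 ≤ iteratedFDeriv ℝ 2 f x ![v, v] ∧
      iteratedFDeriv ℝ 2 f x ![v, v] ≤ U * ‖v‖ ^ 2

theorem abs_sub_mul_le_max_mul {s q L U α : ℝ} (hs : 0 ≤ s) (hLq : L * s ≤ q) (hqU : q ≤ U * s) :
    |s - α * q| ≤ max |1 - α * L| |1 - α * U| * s := by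
  rw [abs_le]
  rcases le_total 0 α with hα | hα <;> constructor <;>
    nlinarith [le_max_left |1 - α * L| |1 - α * U|, le_max_right |1 - α * L| |1 - α * U|,
      le_abs_self (1 - α * L), neg_abs_le (1 - α * L),
      le_abs_self (1 - α * U), neg_abs_le (1 - α * U)]

theorem max_abs_one_sub_two_div_add_mul {L U : ℝ} (hL : 0 < L) (hLU : L ≤ U) :
    max |1 - 2 / (L + U) * L| |1 - 2 / (L + U) * U| = (U - L) / (L + U) := by
  have : L + U ≠ 0 := by linarith
  have h1 : 1 - 2 / (L + U) * L = (U - L) / (L + U) := by field_simp; ring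
  have h2 : 1 - 2 / (L + U) * U = -((U - L) / (L + U)) := by field_simp; ring
  rw [h1, h2, abs_neg, max_self, abs_of_nonneg (div_nonneg (by linarith) (by linarith))]

theorem LipschitzWith.dist_le_pow_mul_of_isFixedPt {X : Type*} [PseudoMetricSpace X] {K : ℝ≥0}
    {G : X → X} (hG : LipschitzWith K G) {p : X} (hp : Function.IsFixedPt G p) {x : ℕ → X}
    (hx : ∀ k, x (k + 1) = G (x k)) (k : ℕ) : dist (x k) p ≤ K ^ k * dist (x 0) p := by
  induction k with
  | zero => simp
  | succ k ih =>
    calc dist (x (k + 1)) p = dist (G (x k)) (G p) := by rw [hx, hp.eq]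
      _ ≤ K * dist (x k) p := hG.dist_le_mul _ _
      _ ≤ K * (K ^ k * dist (x 0) p) := by gcongr
      _ = K ^ (k + 1) * dist (x 0) p := by ring

section InnerProductSpace

variable {E : Type*} [NormedAddCommGroup E] [InnerProductSpace ℝ E]

theorem ContinuousLinearMap.norm_le_of_abs_inner_self_le {T : E →L[ℝ] E}
    (hT : (T : E →ₗ[ℝ] E).IsSymmetric) {C : ℝ} (hC : 0 ≤ C)
    (h : ∀ x, |⟪T x, x⟫| ≤ C * ‖x‖ ^ 2) : ‖T‖ ≤ C := by
  rw [T.norm_eq_iSup_rayleighQuotient hT]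
  refine ciSup_le fun x ↦ ?_
  rcases eq_or_ne x 0 with rfl | hx
  · simpa using hC
  rw [rayleighQuotient, reApplyInnerSelf_apply, RCLike.re_to_real, abs_div, abs_sq,
    div_le_iff₀ (by positivity)]
  exact h x

variable [CompleteSpace E] {f : E → ℝ}

theorem IsLocalMin.gradient_eq_zero {a : E} (h : IsLocalMin f a) :
    gradient f a = 0 := by
  rw [gradient, h.fderiv_eq_zero, map_zero]

theorem hasFDerivAt_gradient (hf : ContDiff ℝ 2 f) (x : E) :
    HasFDerivAt (gradient f)
      ((toDual ℝ E).symm.toLinearIsometry.toContinuousLinearMap ∘L fderiv ℝ (fderiv ℝ f) x) x := by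
  have hdf : Differentiable ℝ (fderiv ℝ f) :=
    (hf.fderiv_right (m := 1) le_rfl).differentiable one_ne_zero
  exact (toDual ℝ E).symm.toLinearIsometry.toContinuousLinearMap.hasFDerivAt.comp x
    (hdf x).hasFDerivAt

theorem lipschitzWith_sub_smul_gradient {L U : ℝ} (hf : ContDiff ℝ 2 f)
    (hH : ∀ x v : E, L * ‖v‖ ^ 2 ≤ iteratedFDeriv ℝ 2 f x ![v, v] ∧
      iteratedFDeriv ℝ 2 f x ![v, v] ≤ U * ‖v‖ ^ 2) (α : ℝ) :
    LipschitzWith (max ‖1 - α * L‖₊ ‖1 - α * U‖₊) (fun z ↦ z - α • gradient f z) := by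
  set H : E → E →L[ℝ] E := fun x ↦
    (toDual ℝ E).symm.toLinearIsometry.toContinuousLinearMap ∘L fderiv ℝ (fderiv ℝ f) x
  have hstep (x : E) : HasFDerivAt (fun z ↦ z - α • gradient f z)
      (ContinuousLinearMap.id ℝ E - α • H x) x :=
    (hasFDerivAt_id x).sub ((hasFDerivAt_gradient hf x).const_smul α)
  have hinner (x v w : E) : ⟪H x v, w⟫ = fderiv ℝ (fderiv ℝ f) x v w := toDual_symm_apply
  refine lipschitzWith_of_nnnorm_fderiv_le (fun x ↦ (hstep x).differentiableAt) fun x ↦ ?_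
  rw [(hstep x).fderiv, ← NNReal.coe_le_coe, coe_nnnorm, NNReal.coe_max, coe_nnnorm, coe_nnnorm]
  refine ContinuousLinearMap.norm_le_of_abs_inner_self_le (fun v w ↦ ?_) (by positivity) fun v ↦ ?_
  · have hsymm := (hf.contDiffAt (x := x)).isSymmSndFDerivAt (by simp) v w
    change ⟪v - α • H x v, w⟫ = ⟪v, w - α • H x w⟫
    rw [inner_sub_left, inner_sub_right, real_inner_smul_left, real_inner_smul_right, hinner,
      real_inner_comm (H x w) v, hinner, hsymm]
  · obtain ⟨hlow, hup⟩ := hH x v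
    rw [iteratedFDeriv_two_apply] at hlow hup
    change |⟪v - α • H x v, v⟫| ≤ _
    rw [inner_sub_left, real_inner_smul_left, hinner, real_inner_self_eq_norm_sq,
      Real.norm_eq_abs, Real.norm_eq_abs]
    exact abs_sub_mul_le_max_mul (sq_nonneg _) hlow hup

end InnerProductSpace

theorem gradient_descent_optimal_rate_general {n : ℕ} (L U : ℝ) (hL : 0 < L) (hLU : L ≤ U)
    (κ : ℝ) (hκ : κ = U / L)
    (f : EuclideanSpace ℝ (Fin n) → ℝ) (hf : MemFLU L U f)
    (x₀ : EuclideanSpace ℝ (Fin n))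
    (hmin : ∀ y, f x₀ ≤ f y)
    (x : ℕ → EuclideanSpace ℝ (Fin n))
    (hx : ∀ k, x (k + 1) = x k - (2 / (L + U)) • gradient f (x k)) :
    ∀ k, ‖x k - x₀‖ ≤ ((κ - 1) / (κ + 1)) ^ k * ‖x 0 - x₀‖ := by
  intro k
  have hrate : (κ - 1) / (κ + 1) = (U - L) / (L + U) := by
    rw [hκ]; field_simp; ring
  have hfix : Function.IsFixedPt (fun z ↦ z - (2 / (L + U)) • gradient f z) x₀ := by
    simp [Function.IsFixedPt, IsLocalMin.gradient_eq_zero (.of_forall hmin)]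
  have hcontract := (lipschitzWith_sub_smul_gradient hf.1 hf.2.2 _).dist_le_pow_mul_of_isFixedPt hfix hx k
  rwa [dist_eq_norm, dist_eq_norm, NNReal.coe_max, coe_nnnorm, coe_nnnorm,
    Real.norm_eq_abs, Real.norm_eq_abs, max_abs_one_sub_two_div_add_mul hL hLU, ← hrate] at hcontract

/-- For `f ∈ F_{L,U}` with unique minimizer `x₀`, condition number
`κ = U/L`, gradient descent with the optimal step size `α* = 2/(L+U)` satisfies
`‖x⁽ᵏ⁾ − x₀‖ ≤ ((κ−1)/(κ+1))ᵏ ‖x⁽⁰⁾ − x₀‖`. -/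
theorem gradient_descent_optimal_rate {n : ℕ} (L U : ℝ) (hL : 0 < L) (hLU : L ≤ U)
    (κ : ℝ) (hκ : κ = U / L)
    (f : EuclideanSpace ℝ (Fin n) → ℝ) (hf : MemFLU L U f)
    (x₀ : EuclideanSpace ℝ (Fin n))
    (hmin : ∀ y, f x₀ ≤ f y)
    (huniq : ∀ y, (∀ z, f y ≤ f z) → y = x₀)
    (x : ℕ → EuclideanSpace ℝ (Fin n))
    (hx : ∀ k, x (k + 1) = x k - (2 / (L + U)) • gradient f (x k)) :
    ∀ k, ‖x k - x₀‖ ≤ ((κ - 1) / (κ + 1)) ^ k * ‖x 0 - x₀‖ :=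
  gradient_descent_optimal_rate_general L U hL hLU κ hκ f hf x₀ hmin x hx
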